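/- Let G be a (simple, finite) graph and let C be a cycle of length at least 4 in G. If C has a chord (an edge of G joining two non-consecutive vertices of C), then the subgraph of G induced by the vertex set of C contains a triangle or contains two holes which share a common edge. -/

import Mathlib

open SimpleGraph

/-- A hole of a graph: a chordless (induced) cycle of length at least 4. -/
def SimpleGraph.IsHole {V : Type*} (G : SimpleGraph V) {v : V} (c : G.Walk v v) : Prop :=
  c.IsCycle ∧ 4 ≤ c.length ∧
    ∀ x y, x ∈ c.support → y ∈ c.support → G.Adj x y → s(x, y) ∈ c.edges

/-- The set of edge sets of holes of `G`; its cardinality is the number of holes of `G`. -/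
def SimpleGraph.holeEdgeSets {V : Type*} (G : SimpleGraph V) : Set (Set (Sym2 V)) :=
  {E | ∃ (v : V) (c : G.Walk v v), G.IsHole c ∧ E = {e | e ∈ c.edges}}

/-- All holes of `G` are pairwise edge-disjoint: two holes either have the same edge set
or share no edge. -/
def SimpleGraph.HolesEdgeDisjoint {V : Type*} (G : SimpleGraph V) : Prop :=
  ∀ ⦃u v : V⦄ (c₁ : G.Walk u u) (c₂ : G.Walk v v), G.IsHole c₁ → G.IsHole c₂ →
    (∀ e, e ∈ c₁.edges ↔ e ∈ c₂.edges) ∨ (∀ e, e ∈ c₁.edges → e ∉ c₂.edges)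

/-- A maximal clique of `G` (as a vertex set). -/
def SimpleGraph.IsMaxClique {V : Type*} (G : SimpleGraph V) (K : Set V) : Prop :=
  G.IsClique K ∧ ∀ K', G.IsClique K' → K ⊆ K' → K' = K

/-- A non-edge maximal clique: a maximal clique with at least 3 vertices. -/
def SimpleGraph.IsNonEdgeMaxClique {V : Type*} (G : SimpleGraph V) (K : Set V) : Prop :=
  G.IsMaxClique K ∧ 3 ≤ K.ncard

/-- The clique number of `G`. -/
noncomputable def SimpleGraph.cliqueNumber {V : Type*} (G : SimpleGraph V) : ℕ :=
  sSup {n | ∃ s : Finset V, G.IsNClique n s}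

/-- A `K`-avoiding path: a path which is not an edge of the clique `K` and
whose internal vertices all avoid `K`. -/
def SimpleGraph.IsKAvoidingPath {V : Type*} (G : SimpleGraph V) (K : Set V)
    {a b : V} (p : G.Walk a b) : Prop :=
  p.IsPath ∧ ¬(p.length = 1 ∧ a ∈ K ∧ b ∈ K) ∧
    ∀ w ∈ p.support, w = a ∨ w = b ∨ w ∉ K

/-- The competition graph of a digraph given by its arc relation `D`. -/
def competitionGraph {V : Type*} (D : V → V → Prop) : SimpleGraph V where
  Adj x y := x ≠ y ∧ ∃ v, D x v ∧ D y v
  symm := by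
    refine ⟨?_⟩
    rintro x y ⟨hxy, v, hx, hy⟩
    exact ⟨hxy.symm, v, hy, hx⟩
  loopless := by
    refine ⟨?_⟩
    rintro x ⟨hxx, -⟩
    exact hxx rfl

/-- A digraph is acyclic if it has no directed cycle. -/
def DigraphAcyclic {V : Type*} (D : V → V → Prop) : Prop :=
  ∀ x, ¬ Relation.TransGen D x x

/-- `G` together with `k` added isolated vertices. -/
def SimpleGraph.addIsolated {V : Type*} (G : SimpleGraph V) (k : ℕ) :
    SimpleGraph (V ⊕ Fin k) where
  Adj a b := ∃ x y, G.Adj x y ∧ a = Sum.inl x ∧ b = Sum.inl y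
  symm := by
    refine ⟨?_⟩
    rintro a b ⟨x, y, h, rfl, rfl⟩
    exact ⟨y, x, h.symm, rfl, rfl⟩
  loopless := by
    refine ⟨?_⟩
    rintro a ⟨x, y, h, rfl, hxy⟩
    exact h.ne (Sum.inl.inj hxy)

/-- The competition number of `G`: the least `k` such that `G` plus `k` isolated
vertices is the competition graph of an acyclic digraph. -/
noncomputable def competitionNumber {V : Type*} (G : SimpleGraph V) : ℕ :=
  sInf {k | ∃ D : (V ⊕ Fin k) → (V ⊕ Fin k) → Prop,
    DigraphAcyclic D ∧ competitionGraph D = G.addIsolated k}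

/-! A chord `xy` splits the cycle into two paths from `x` to `y`, each of length at least two;
closing each with the chord gives two shorter cycles through the edge `xy`. If one of them is a
triangle we are done, if one has a chord we recurse on it, and otherwise both are holes, sharing
`xy` but not their other edges. -/

namespace SimpleGraph

variable {V : Type*} {G : SimpleGraph V}

def TriangleOrTwoHolesSharingEdgeIn (G : SimpleGraph V) (S : Set V) : Prop :=
  (∃ x y z, x ∈ S ∧ y ∈ S ∧ z ∈ S ∧ G.Adj x y ∧ G.Adj y z ∧ G.Adj x z) ∨
  (∃ (u₁ u₂ : V) (c₁ : G.Walk u₁ u₁) (c₂ : G.Walk u₂ u₂),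
    G.IsHole c₁ ∧ G.IsHole c₂ ∧ (∀ w ∈ c₁.support, w ∈ S) ∧ (∀ w ∈ c₂.support, w ∈ S) ∧
    ¬(∀ e, e ∈ c₁.edges ↔ e ∈ c₂.edges) ∧ (∃ e, e ∈ c₁.edges ∧ e ∈ c₂.edges))

lemma TriangleOrTwoHolesSharingEdgeIn.mono {S T : Set V}
    (h : G.TriangleOrTwoHolesSharingEdgeIn S) (hST : S ⊆ T) :
    G.TriangleOrTwoHolesSharingEdgeIn T := by
  rcases h with ⟨x, y, z, hx, hy, hz, hadj⟩ | ⟨u₁, u₂, c₁, c₂, h₁, h₂, hs₁, hs₂, hshare⟩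
  · exact .inl ⟨x, y, z, hST hx, hST hy, hST hz, hadj⟩
  · exact .inr ⟨u₁, u₂, c₁, c₂, h₁, h₂, fun w hw ↦ hST (hs₁ w hw), fun w hw ↦ hST (hs₂ w hw),
      hshare⟩

namespace Walk

def HasChord {v : V} (c : G.Walk v v) : Prop :=
  ∃ x y, x ∈ c.support ∧ y ∈ c.support ∧ G.Adj x y ∧ s(x, y) ∉ c.edges

lemma IsCycle.isHole_of_not_hasChord {v : V} {c : G.Walk v v} (hc : c.IsCycle)
    (hlen : 4 ≤ c.length) (h : ¬c.HasChord) : G.IsHole c := by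
  refine ⟨hc, hlen, fun x y hx hy hxy ↦ ?_⟩
  by_contra hne
  exact h ⟨x, y, hx, hy, hxy, hne⟩

lemma IsCycle.isPath_dropUntil [DecidableEq V] {v w : V} {c : G.Walk v v} (hc : c.IsCycle)
    (h : w ∈ c.support) (hwv : w ≠ v) : (c.dropUntil w h).IsPath := by
  rw [← take_spec c h] at hc
  exact hc.isPath_of_append_right (not_nil_of_ne hwv.symm)

lemma two_le_length_of_notMem_edges {u v : V} (p : G.Walk u v) (huv : G.Adj u v)
    (h : s(u, v) ∉ p.edges) : 2 ≤ p.length := by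
  match p with
  | nil => exact absurd rfl huv.ne
  | cons _ nil => simp at h
  | cons _ (cons _ _) => simp

lemma exists_adj_adj_of_length_eq_two {u v : V} (p : G.Walk u v) (h : p.length = 2) :
    ∃ m ∈ p.support, G.Adj u m ∧ G.Adj m v := by
  obtain ⟨hu, hv⟩ :=
    (G.mem_commonNeighbors).mp (G.walkLengthTwoEquivCommonNeighbors u v ⟨p, h⟩).prop
  exact ⟨p.snd, p.getVert_mem_support 1, hu, hv.symm⟩

lemma not_forall_mem_edges_cons_iff_of_disjoint {x y : V} (hxy : G.Adj x y) {t : G.Walk x y}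
    {d : G.Walk y x} (ht : ¬t.Nil) (hxt : s(x, y) ∉ t.edges) (hdisj : t.edges.Disjoint d.edges) :
    ¬∀ e, e ∈ (cons hxy d).edges ↔ e ∈ (cons hxy.symm t).edges := by
  intro h
  obtain ⟨e, he⟩ := List.exists_mem_of_ne_nil t.edges (by simpa using ht)
  have : e = s(x, y) ∨ e ∈ d.edges := by simpa using (h e).mpr (by simp [he])
  rcases this with rfl | hed
  · exact hxt he
  · exact hdisj he hed

lemma IsCycle.triangleOrTwoHolesSharingEdgeIn_of_adj_of_notMem_edges [DecidableEq V]
    {x y : V} {c : G.Walk x x} (hc : c.IsCycle) (hy : y ∈ c.support) (hxy : G.Adj x y)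
    (hne : s(x, y) ∉ c.edges)
    (ih : ∀ {u} (C : G.Walk u u), C.IsCycle → 4 ≤ C.length → C.length < c.length →
      (∀ w ∈ C.support, w ∈ c.support) →
      G.IsHole C ∨ G.TriangleOrTwoHolesSharingEdgeIn {w | w ∈ c.support}) :
    G.TriangleOrTwoHolesSharingEdgeIn {w | w ∈ c.support} := by
  set t := c.takeUntil y hy
  set d := c.dropUntil y hy
  have htE : ∀ e ∈ t.edges, e ∈ c.edges := fun _ ↦ (c.edges_takeUntil_subset_edges hy ·)
  have hdE : ∀ e ∈ d.edges, e ∈ c.edges := fun _ ↦ (c.edges_dropUntil_subset_edges hy ·)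
  have htS : ∀ w ∈ t.support, w ∈ c.support := fun _ ↦ (c.support_takeUntil_subset_support hy ·)
  have hdS : ∀ w ∈ d.support, w ∈ c.support := fun _ ↦ (c.support_dropUntil_subset_support hy ·)
  have hxt : s(x, y) ∉ t.edges := fun h ↦ hne (htE _ h)
  have hyd : s(y, x) ∉ d.edges := fun h ↦ hne (hdE _ (Sym2.eq_swap ▸ h))
  have ht2 := two_le_length_of_notMem_edges t hxy hxt
  have hd2 := two_le_length_of_notMem_edges d hxy.symm hyd
  have hlen : t.length + d.length = c.length := by rw [← length_append, take_spec]
  rcases ht2.eq_or_lt with ht2 | ht3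
  · obtain ⟨m, hm, hxm, hmy⟩ := exists_adj_adj_of_length_eq_two t ht2.symm
    exact .inl ⟨x, y, m, c.start_mem_support, hy, htS m hm, hxy, hmy.symm, hxm⟩
  rcases hd2.eq_or_lt with hd2 | hd3
  · obtain ⟨m, hm, hym, hmx⟩ := exists_adj_adj_of_length_eq_two d hd2.symm
    exact .inl ⟨x, y, m, c.start_mem_support, hy, hdS m hm, hxy, hym, hmx.symm⟩
  have hC₁ : (cons hxy d).IsCycle :=
    (cons_isCycle_iff d hxy).mpr ⟨hc.isPath_dropUntil hy hxy.ne', fun h ↦ hyd (Sym2.eq_swap ▸ h)⟩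
  have hC₂ : (cons hxy.symm t).IsCycle :=
    (cons_isCycle_iff t hxy.symm).mpr ⟨hc.isPath_takeUntil hy, fun h ↦ hxt (Sym2.eq_swap ▸ h)⟩
  have hS₁ : ∀ w ∈ (cons hxy d).support, w ∈ c.support := by simpa [support_cons] using hdS
  have hS₂ : ∀ w ∈ (cons hxy.symm t).support, w ∈ c.support := by
    simpa [support_cons] using ⟨hy, htS⟩
  by_contra hP
  have hole₁ := (ih _ hC₁ (by simp only [length_cons]; omega) (by simp only [length_cons]; omega)
    hS₁).resolve_right hP
  have hole₂ := (ih _ hC₂ (by simp only [length_cons]; omega) (by simp only [length_cons]; omega)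
    hS₂).resolve_right hP
  have hdiff := not_forall_mem_edges_cons_iff_of_disjoint hxy (not_nil_of_ne hxy.ne) hxt
    (hc.isTrail.disjoint_edges_takeUntil_dropUntil hy)
  exact hP <| .inr
    ⟨x, y, _, _, hole₁, hole₂, hS₁, hS₂, hdiff, s(x, y), by simp, by simp [Sym2.eq_swap]⟩

theorem IsCycle.triangleOrTwoHolesSharingEdgeIn_of_hasChord {v : V} {c : G.Walk v v}
    (hc : c.IsCycle) (hch : c.HasChord) :
    G.TriangleOrTwoHolesSharingEdgeIn {w | w ∈ c.support} := by
  classical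
  induction hn : c.length using Nat.strong_induction_on generalizing v c with
  | _ n ih =>
  obtain ⟨x, y, hx, hy, hxy, hne⟩ := hch
  have hsupp : {w | w ∈ c.support} = {w | w ∈ (c.rotate x hx).support} := by
    simp only [mem_support_rotate_iff]
  rw [hsupp]
  refine (hc.rotate hx).triangleOrTwoHolesSharingEdgeIn_of_adj_of_notMem_edges
    ((mem_support_rotate_iff ..).mpr hy) hxy (fun h ↦ hne ((rotate_edges c x hx).perm.mem_iff.mp h))
    fun C hC hlen hlt hS ↦ ?_
  by_cases hCch : C.HasChord
  · exact .inr ((ih _ (by simpa [hn] using hlt) hC hCch rfl).mono hS)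
  · exact .inl (hC.isHole_of_not_hasChord hlen hCch)

end Walk

end SimpleGraph

theorem cycle_with_chord_triangle_or_two_holes_sharing_edge_general
    {V : Type*} (G : SimpleGraph V) {v : V} (c : G.Walk v v)
    (hc : c.IsCycle)
    (hchord : ∃ x y, x ∈ c.support ∧ y ∈ c.support ∧ G.Adj x y ∧ s(x, y) ∉ c.edges) :
    (∃ x y z, x ∈ c.support ∧ y ∈ c.support ∧ z ∈ c.support ∧
      G.Adj x y ∧ G.Adj y z ∧ G.Adj x z) ∨
    (∃ (u₁ u₂ : V) (c₁ : G.Walk u₁ u₁) (c₂ : G.Walk u₂ u₂),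
      G.IsHole c₁ ∧ G.IsHole c₂ ∧
      (∀ w ∈ c₁.support, w ∈ c.support) ∧ (∀ w ∈ c₂.support, w ∈ c.support) ∧
      ¬(∀ e, e ∈ c₁.edges ↔ e ∈ c₂.edges) ∧ (∃ e, e ∈ c₁.edges ∧ e ∈ c₂.edges)) :=
  hc.triangleOrTwoHolesSharingEdgeIn_of_hasChord hchord

/-- **Lemma 1.** If a cycle `c` of length at least 4 in `G` has a chord,
then the subgraph of `G` induced by the vertices of `c` contains a triangle or
contains two holes sharing a common edge. -/
theorem cycle_with_chord_triangle_or_two_holes_sharing_edge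
    {V : Type*} [Fintype V] (G : SimpleGraph V) {v : V} (c : G.Walk v v)
    (hc : c.IsCycle) (hlen : 4 ≤ c.length)
    (hchord : ∃ x y, x ∈ c.support ∧ y ∈ c.support ∧ G.Adj x y ∧ s(x, y) ∉ c.edges) :
    (∃ x y z, x ∈ c.support ∧ y ∈ c.support ∧ z ∈ c.support ∧
      G.Adj x y ∧ G.Adj y z ∧ G.Adj x z) ∨
    (∃ (u₁ u₂ : V) (c₁ : G.Walk u₁ u₁) (c₂ : G.Walk u₂ u₂),
      G.IsHole c₁ ∧ G.IsHole c₂ ∧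
      (∀ w ∈ c₁.support, w ∈ c.support) ∧ (∀ w ∈ c₂.support, w ∈ c.support) ∧
      ¬(∀ e, e ∈ c₁.edges ↔ e ∈ c₂.edges) ∧ (∃ e, e ∈ c₁.edges ∧ e ∈ c₂.edges)) :=
  cycle_with_chord_triangle_or_two_holes_sharing_edge_general G c hc hchord
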